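/- Ascent property of Approximate TMA: let ε' > 0, let π be a policy, let p and p' be transition kernels, and let Ĝ : S×A×S → ℝ be an estimate of the action next-state value function satisfying max_{(s,a,s')} |Ĝ(s,a,s') − G_{π,p}(s,a,s')| ≤ ε'. Suppose that for every (s,a) ∈ S×A, Σ_{s'∈S} (p(s'|s,a) − p'(s'|s,a))·Ĝ(s,a,s') ≤ 0 (the ascent condition satisfied by the Approximate TMA update producing p' from p). Then V_{π,p}(ρ) − V_{π,p'}(ρ) ≤ 2ε'/(1−γ). -/

import Mathlib

open Finset

variable {S A : Type*}

/-- Expected one-step cost `c_{π,p}(s) = Σ_a π(a|s) Σ_{s'} p(s'|s,a) c(s,a,s')`. -/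
noncomputable def cPi [Fintype S] [Fintype A] (π : S → A → ℝ) (p : S → A → S → ℝ)
    (c : S → A → S → ℝ) (s : S) : ℝ :=
  ∑ a, π s a * ∑ s', p s a s' * c s a s'

/-- Induced state-transition matrix `M_{π,p}(s,s') = Σ_a π(a|s) p(s'|s,a)`. -/
noncomputable def matPi [Fintype A] (π : S → A → ℝ) (p : S → A → S → ℝ) :
    Matrix S S ℝ :=
  Matrix.of fun s s' => ∑ a, π s a * p s a s'

/-- Discounted value function `V_{π,p}(s) = Σ_{l} γ^l ((M_{π,p})^l c_{π,p})(s)`. -/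
noncomputable def Vf [Fintype S] [Fintype A] [DecidableEq S] (γ : ℝ) (π : S → A → ℝ)
    (p : S → A → S → ℝ) (c : S → A → S → ℝ) (s : S) : ℝ :=
  ∑' l : ℕ, γ ^ l * ((matPi π p ^ l).mulVec (cPi π p c)) s

/-- Value from an initial distribution, `V_{π,p}(ρ) = Σ_s ρ(s) V_{π,p}(s)`. -/
noncomputable def Vrho [Fintype S] [Fintype A] [DecidableEq S] (γ : ℝ) (ρ : S → ℝ)
    (π : S → A → ℝ) (p : S → A → S → ℝ) (c : S → A → S → ℝ) : ℝ :=
  ∑ s, ρ s * Vf γ π p c s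

/-- Discounted state visitation distribution
`d_ρ^{π,p}(s) = (1-γ) Σ_l γ^l Σ_{s₀} ρ(s₀) ((M_{π,p})^l)(s₀,s)`. -/
noncomputable def dvisit [Fintype S] [Fintype A] [DecidableEq S] (γ : ℝ) (ρ : S → ℝ)
    (π : S → A → ℝ) (p : S → A → S → ℝ) (s : S) : ℝ :=
  (1 - γ) * ∑' l : ℕ, γ ^ l * ∑ s₀, ρ s₀ * (matPi π p ^ l) s₀ s

/-!
By the Bellman equation `V_{π,p}(s) = Σ_a π(a|s) Σ_{s'} p(s'|s,a) G_{π,p}(s,a,s')`, the gap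
`Δ = V_{π,p} - V_{π,p'}` solves `Δ = g + γ M_{π,p'} Δ` with
`g(s) = Σ_a π(a|s) Σ_{s'} (p - p')(s'|s,a) G_{π,p}(s,a,s')`. Replacing `G_{π,p}` by `Ĝ` changes
each inner sum by at most `2ε'`, and the ascent condition makes the `Ĝ`-sum nonpositive, so
`g ≤ 2ε'`. At a maximiser of `Δ`, stochasticity of `M_{π,p'}` gives `max Δ ≤ 2ε' + γ max Δ`.
-/

lemma Finset.sum_mul_le_of_sum_eq_one {ι : Type*} {s : Finset ι} {w f : ι → ℝ} {C : ℝ}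
    (hw0 : ∀ i ∈ s, 0 ≤ w i) (hw1 : ∑ i ∈ s, w i = 1) (hf : ∀ i ∈ s, f i ≤ C) :
    ∑ i ∈ s, w i * f i ≤ C :=
  calc ∑ i ∈ s, w i * f i ≤ ∑ i ∈ s, w i * C :=
        sum_le_sum fun i hi => mul_le_mul_of_nonneg_left (hf i hi) (hw0 i hi)
    _ = C := by rw [← sum_mul, hw1, one_mul]

lemma sum_sub_mul_le_two_mul_of_abs_sub_le {ι : Type*} [Fintype ι] {q q' G Ĝ : ι → ℝ} {ε : ℝ}
    (hq0 : ∀ i, 0 ≤ q i) (hq1 : ∑ i, q i = 1) (hq'0 : ∀ i, 0 ≤ q' i) (hq'1 : ∑ i, q' i = 1)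
    (hĜ : ∀ i, |Ĝ i - G i| ≤ ε) (hascent : ∑ i, (q i - q' i) * Ĝ i ≤ 0) :
    ∑ i, (q i - q' i) * G i ≤ 2 * ε := by
  have herr : ∀ i, (q i - q' i) * (G i - Ĝ i) ≤ (q i + q' i) * ε := fun i =>
    calc (q i - q' i) * (G i - Ĝ i) ≤ |q i - q' i| * |G i - Ĝ i| := by
          rw [← abs_mul]; exact le_abs_self _
      _ ≤ (q i + q' i) * ε := by
          refine mul_le_mul ?_ (abs_sub_comm (G i) (Ĝ i) ▸ hĜ i) (abs_nonneg _)
            (add_nonneg (hq0 i) (hq'0 i))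
          rw [abs_le]; constructor <;> linarith [hq0 i, hq'0 i]
  calc ∑ i, (q i - q' i) * G i
      = ∑ i, (q i - q' i) * Ĝ i + ∑ i, (q i - q' i) * (G i - Ĝ i) := by
        rw [← sum_add_distrib]; exact sum_congr rfl fun i _ => by ring
    _ ≤ 0 + ∑ i, (q i + q' i) * ε := add_le_add hascent (sum_le_sum fun i _ => herr i)
    _ = 2 * ε := by rw [← sum_mul, sum_add_distrib, hq1, hq'1]; ring

namespace Matrix

variable {n : Type*} [Fintype n] [DecidableEq n] {M : Matrix n n ℝ} {γ : ℝ}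

lemma mulVec_le_of_mem_rowStochastic (hM : M ∈ rowStochastic ℝ n) {v : n → ℝ} {C : ℝ}
    (hv : ∀ j, v j ≤ C) (i : n) : (M *ᵥ v) i ≤ C :=
  sum_mul_le_of_sum_eq_one (fun _ _ => nonneg_of_mem_rowStochastic hM)
    (sum_row_of_mem_rowStochastic hM i) fun j _ => hv j

lemma abs_mulVec_le_of_mem_rowStochastic (hM : M ∈ rowStochastic ℝ n) {v : n → ℝ} {C : ℝ}
    (hv : ∀ j, |v j| ≤ C) (i : n) : |(M *ᵥ v) i| ≤ C := by
  have hneg := mulVec_le_of_mem_rowStochastic hM (v := -v)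
    (fun j => (neg_le_abs (v j)).trans (hv j)) i
  rw [mulVec_neg, Pi.neg_apply] at hneg
  exact abs_le.2 ⟨by linarith,
    mulVec_le_of_mem_rowStochastic hM (fun j => (le_abs_self (v j)).trans (hv j)) i⟩

lemma summable_pow_mul_pow_mulVec (hγ0 : 0 ≤ γ) (hγ1 : γ < 1) (hM : M ∈ rowStochastic ℝ n)
    (v : n → ℝ) (i : n) : Summable fun l : ℕ => γ ^ l * (M ^ l *ᵥ v) i := by
  refine .of_norm_bounded ((summable_geometric_of_lt_one hγ0 hγ1).mul_left ‖v‖) fun l => ?_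
  rw [Real.norm_eq_abs, abs_mul, abs_pow, abs_of_nonneg hγ0, mul_comm ‖v‖]
  gcongr
  exact abs_mulVec_le_of_mem_rowStochastic (pow_mem hM l) (fun j => norm_le_pi_norm v j) i

lemma tsum_pow_mul_pow_mulVec_eq (hγ0 : 0 ≤ γ) (hγ1 : γ < 1) (hM : M ∈ rowStochastic ℝ n)
    (v : n → ℝ) (i : n) :
    ∑' l : ℕ, γ ^ l * (M ^ l *ᵥ v) i
      = v i + γ * (M *ᵥ fun j => ∑' l : ℕ, γ ^ l * (M ^ l *ᵥ v) j) i := by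
  have hsum := summable_pow_mul_pow_mulVec hγ0 hγ1 hM v
  have hshift : ∀ l : ℕ, γ ^ (l + 1) * (M ^ (l + 1) *ᵥ v) i
      = ∑ j, γ * M i j * (γ ^ l * (M ^ l *ᵥ v) j) := fun l => by
    rw [pow_succ', pow_succ' M, ← mulVec_mulVec]
    simp only [mulVec, dotProduct, mul_sum]
    exact sum_congr rfl fun j _ => sum_congr rfl fun k _ => by ring
  rw [(hsum i).tsum_eq_zero_add, tsum_congr hshift,
    Summable.tsum_finsetSum fun j _ => (hsum j).mul_left _]
  simp only [pow_zero, one_mul, one_mulVec, tsum_mul_left]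
  simp only [mulVec, dotProduct, mul_sum, mul_assoc]

lemma le_div_one_sub_of_le_add_mul_mulVec (hγ0 : 0 ≤ γ) (hγ1 : γ < 1)
    (hM : M ∈ rowStochastic ℝ n) {Δ : n → ℝ} {B : ℝ} (h : ∀ i, Δ i ≤ B + γ * (M *ᵥ Δ) i)
    (i : n) : Δ i ≤ B / (1 - γ) := by
  have : Nonempty n := ⟨i⟩
  obtain ⟨k, hk⟩ := Finite.exists_max Δ
  have hmax : Δ k ≤ B + γ * Δ k :=
    (h k).trans (by gcongr; exact mulVec_le_of_mem_rowStochastic hM hk k)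
  rw [le_div_iff₀ (by linarith)]
  nlinarith [hk i]

end Matrix

section MDP

open Matrix

variable [Fintype S] [Fintype A] [DecidableEq S] {γ : ℝ} {π : S → A → ℝ} {p : S → A → S → ℝ}

/-- The action next-state value function `G_{π,p}`. -/
noncomputable def Gf (γ : ℝ) (π : S → A → ℝ) (p : S → A → S → ℝ) (c : S → A → S → ℝ)
    (s : S) (a : A) (s' : S) : ℝ :=
  c s a s' + γ * Vf γ π p c s'

lemma matPi_mem_rowStochastic (hπ0 : ∀ s a, 0 ≤ π s a) (hπ1 : ∀ s, ∑ a, π s a = 1)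
    (hp0 : ∀ s a s', 0 ≤ p s a s') (hp1 : ∀ s a, ∑ s', p s a s' = 1) :
    matPi π p ∈ rowStochastic ℝ S := by
  refine mem_rowStochastic_iff_sum.2
    ⟨fun s s' => sum_nonneg fun a _ => mul_nonneg (hπ0 s a) (hp0 s a s'), fun s => ?_⟩
  simp only [matPi, of_apply]
  rw [sum_comm]
  simp [← mul_sum, hp1, hπ1]

omit [DecidableEq S] in
lemma matPi_mulVec_apply (w : S → ℝ) (s : S) :
    (matPi π p *ᵥ w) s = ∑ a, π s a * ∑ s', p s a s' * w s' := by
  simp only [mulVec, dotProduct, matPi, of_apply, sum_mul, mul_sum, mul_assoc]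
  exact sum_comm

lemma Vf_eq_sum_Gf (hγ0 : 0 ≤ γ) (hγ1 : γ < 1)
    (hπ0 : ∀ s a, 0 ≤ π s a) (hπ1 : ∀ s, ∑ a, π s a = 1)
    (hp0 : ∀ s a s', 0 ≤ p s a s') (hp1 : ∀ s a, ∑ s', p s a s' = 1)
    (c : S → A → S → ℝ) (s : S) :
    Vf γ π p c s = ∑ a, π s a * ∑ s', p s a s' * Gf γ π p c s a s' := by
  rw [Vf, tsum_pow_mul_pow_mulVec_eq hγ0 hγ1 (matPi_mem_rowStochastic hπ0 hπ1 hp0 hp1),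
    matPi_mulVec_apply, cPi, mul_sum, ← sum_add_distrib]
  refine sum_congr rfl fun a _ => ?_
  simp only [Gf, Vf, mul_add, sum_add_distrib, mul_sum]
  ring_nf

lemma Vf_sub_Vf_eq {p' : S → A → S → ℝ} (hγ0 : 0 ≤ γ) (hγ1 : γ < 1)
    (hπ0 : ∀ s a, 0 ≤ π s a) (hπ1 : ∀ s, ∑ a, π s a = 1)
    (hp0 : ∀ s a s', 0 ≤ p s a s') (hp1 : ∀ s a, ∑ s', p s a s' = 1)
    (hp'0 : ∀ s a s', 0 ≤ p' s a s') (hp'1 : ∀ s a, ∑ s', p' s a s' = 1)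
    (c : S → A → S → ℝ) (s : S) :
    Vf γ π p c s - Vf γ π p' c s
      = ∑ a, π s a * ∑ s', (p s a s' - p' s a s') * Gf γ π p c s a s'
        + γ * (matPi π p' *ᵥ (Vf γ π p c - Vf γ π p' c)) s := by
  rw [Vf_eq_sum_Gf hγ0 hγ1 hπ0 hπ1 hp0 hp1, Vf_eq_sum_Gf hγ0 hγ1 hπ0 hπ1 hp'0 hp'1,
    matPi_mulVec_apply, mul_sum, ← sum_add_distrib, ← sum_sub_distrib]
  refine sum_congr rfl fun a _ => ?_
  simp only [Gf, Pi.sub_apply, ← mul_sub, ← sum_sub_distrib, mul_sum, ← sum_add_distrib]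
  exact sum_congr rfl fun s' _ => by ring

end MDP

theorem approximate_tma_ascent_property_general
    [Fintype S] [Fintype A] [DecidableEq S]
    (γ : ℝ) (hγ0 : 0 ≤ γ) (hγ1 : γ < 1)
    (c : S → A → S → ℝ)
    (π : S → A → ℝ) (hπ0 : ∀ s a, 0 ≤ π s a) (hπ1 : ∀ s, ∑ a, π s a = 1)
    (p p' : S → A → S → ℝ)
    (hp0 : ∀ s a s', 0 ≤ p s a s') (hp1 : ∀ s a, ∑ s', p s a s' = 1)
    (hp'0 : ∀ s a s', 0 ≤ p' s a s') (hp'1 : ∀ s a, ∑ s', p' s a s' = 1)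
    (ρ : S → ℝ) (hρ0 : ∀ s, 0 ≤ ρ s) (hρ1 : ∑ s, ρ s = 1)
    (ε' : ℝ)
    (Ghat : S → A → S → ℝ)
    (hGhat : ∀ s a s', |Ghat s a s' - (c s a s' + γ * Vf γ π p c s')| ≤ ε')
    (hascent : ∀ s a, ∑ s', (p s a s' - p' s a s') * Ghat s a s' ≤ 0) :
    Vrho γ ρ π p c - Vrho γ ρ π p' c ≤ 2 * ε' / (1 - γ) := by
  have hadvantage :
      ∀ s, ∑ a, π s a * ∑ s', (p s a s' - p' s a s') * Gf γ π p c s a s' ≤ 2 * ε' :=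
    fun s => sum_mul_le_of_sum_eq_one (fun a _ => hπ0 s a) (hπ1 s) fun a _ =>
      sum_sub_mul_le_two_mul_of_abs_sub_le (hp0 s a) (hp1 s a) (hp'0 s a) (hp'1 s a)
        (hGhat s a) (hascent s a)
  have hgap : ∀ s, Vf γ π p c s - Vf γ π p' c s ≤ 2 * ε' / (1 - γ) :=
    Matrix.le_div_one_sub_of_le_add_mul_mulVec (Δ := Vf γ π p c - Vf γ π p' c) hγ0 hγ1
      (matPi_mem_rowStochastic hπ0 hπ1 hp'0 hp'1) fun s =>
        (Vf_sub_Vf_eq hγ0 hγ1 hπ0 hπ1 hp0 hp1 hp'0 hp'1 c s).trans_le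
          (add_le_add_left (hadvantage s) _)
  rw [Vrho, Vrho, ← sum_sub_distrib]
  simp_rw [← mul_sub]
  exact sum_mul_le_of_sum_eq_one (fun s _ => hρ0 s) hρ1 fun s _ => hgap s

/-- Ascent property of Approximate TMA: if `Ĝ` is an `ε'`-accurate estimate of the action
next-state value function `G_{π,p}(s,a,s') = c(s,a,s') + γ V_{π,p}(s')` and the update
producing `p'` from `p` satisfies the ascent condition
`Σ_{s'} (p(s'|s,a) - p'(s'|s,a)) Ĝ(s,a,s') ≤ 0` for all `(s,a)`, then
`V_{π,p}(ρ) - V_{π,p'}(ρ) ≤ 2ε'/(1-γ)`. -/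
theorem approximate_tma_ascent_property
    [Fintype S] [Fintype A] [DecidableEq S] [Nonempty S] [Nonempty A]
    (γ : ℝ) (hγ0 : 0 ≤ γ) (hγ1 : γ < 1)
    (c : S → A → S → ℝ)
    (π : S → A → ℝ) (hπ0 : ∀ s a, 0 ≤ π s a) (hπ1 : ∀ s, ∑ a, π s a = 1)
    (p p' : S → A → S → ℝ)
    (hp0 : ∀ s a s', 0 ≤ p s a s') (hp1 : ∀ s a, ∑ s', p s a s' = 1)
    (hp'0 : ∀ s a s', 0 ≤ p' s a s') (hp'1 : ∀ s a, ∑ s', p' s a s' = 1)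
    (ρ : S → ℝ) (hρ0 : ∀ s, 0 ≤ ρ s) (hρ1 : ∑ s, ρ s = 1)
    (ε' : ℝ) (hε' : 0 < ε')
    (Ghat : S → A → S → ℝ)
    (hGhat : ∀ s a s', |Ghat s a s' - (c s a s' + γ * Vf γ π p c s')| ≤ ε')
    (hascent : ∀ s a, ∑ s', (p s a s' - p' s a s') * Ghat s a s' ≤ 0) :
    Vrho γ ρ π p c - Vrho γ ρ π p' c ≤ 2 * ε' / (1 - γ) :=
  approximate_tma_ascent_property_general γ hγ0 hγ1 c π hπ0 hπ1 p p' hp0 hp1 hp'0 hp'1 ρ hρ0 hρ1 ε'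
    Ghat hGhat hascent
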